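/- arXiv:math/0610703 — 3 statements merged into one kernel-verified Lean document; each statement's English description precedes it below -/
import Mathlib

section
/- Let 𝒢 be a Lie group modeled on a finite-dimensional real vector space, let H be a second-countable Lie group, and let ι : H → 𝒢 be an injective smooth group homomorphism which is an immersion (the differential of ι at every point of H is injective), so that the range ι(H) is a not necessarily closed Lie subgroup of 𝒢. Let J ⊆ ℝ be an interval and λ : J → 𝒢 a continuous curve. If λ⁻¹(ι(H)) is open in J and nonempty, then λ(J) ⊆ ι(H). -/
/-!
Use the inverse function theorem on `(y, c) ↦ ι(y) σ(c)`, where `σ` parametrises a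
transversal `m` to `dι(T₁H)`: near `1`, every `g ∈ 𝒢` is uniquely `ι(y) σ(c)` with `y` near `1`
in `H` and `c` near `0` in `m`. The coordinate `c` vanishes only on `ι(H)`, and on `ι(H)` it
takes countably many values: distinct values `c` with `σ(c) = ι(k_c)` give disjoint open sets
`W k_c ⊆ H`, and `H` is second countable.

For `s` on the curve with `λ(s) ∈ ι(H)`, the coordinate `c` of `λ(s)⁻¹ λ(t)` is continuous for
`t` near `s`, and it has countable, hence constant, image on every interval inside the open set
`λ⁻¹(ι(H))`. So it stays `0` up to the boundary of that set, which forces `λ⁻¹(ι(H))` to be closed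
in `J` as well; `J` is connected.
-/

open scoped Manifold Pointwise
open Set Filter Topology

theorem IsPreconnected.iff_of_eventually_iff {α : Type*} [TopologicalSpace α] {s : Set α}
    (hs : IsPreconnected s) {p : α → Prop} (h : ∀ x ∈ s, ∀ᶠ y in 𝓝[s] x, (p x ↔ p y))
    {x y : α} (hx : x ∈ s) (hy : y ∈ s) : p x ↔ p y :=
  hs.induction₂ (fun x y => p x ↔ p y) h (fun _ _ _ _ _ _ => Iff.trans)
    (fun _ _ _ _ => Iff.symm) hx hy

theorem Set.OrdConnected.apply_eq_of_countable_image {X : Type*} [MetricSpace X] {I : Set ℝ}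
    (hI : I.OrdConnected) {f : ℝ → X} (hf : ContinuousOn f I) {S : Set ℝ}
    (hS : ∀ t ∈ I ∩ S, S ∈ 𝓝[I] t) (hcount : (f '' (I ∩ S)).Countable) {x : X}
    (hfib : ∀ t ∈ I, f t = x → t ∈ S) {s t : ℝ} (hs : s ∈ I) (ht : t ∈ I) (hfs : f s = x) :
    f t = x := by
  refine (hI.isPreconnected.iff_of_eventually_iff (p := fun u => f u = x) (fun u hu => ?_) hs
    ht).1 hfs
  by_cases hfu : f u = x
  · obtain ⟨ε, hε, hball⟩ := Metric.mem_nhdsWithin_iff.1 (hS u ⟨hu, hfib u hu hfu⟩)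
    have hN : (Metric.ball u ε ∩ I).OrdConnected := by
      rw [Real.ball_eq_Ioo]
      exact ordConnected_Ioo.inter hI
    have hsub : Metric.ball u ε ∩ I ⊆ I ∩ S := fun v hv => ⟨hv.2, hball hv⟩
    have hconst : (f '' (Metric.ball u ε ∩ I)).Subsingleton :=
      (hcount.mono (image_mono hsub)).isTotallyDisconnected _ subset_rfl
        (hN.isPreconnected.image f (hf.mono inter_subset_right))
    filter_upwards [inter_mem_nhdsWithin I (Metric.ball_mem_nhds u hε)] with v hv
    have hv' : v ∈ Metric.ball u ε ∩ I := ⟨hv.2, hv.1⟩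
    have huv := hconst (mem_image_of_mem f ⟨Metric.mem_ball_self hε, hu⟩) (mem_image_of_mem f hv')
    exact iff_of_true hfu (huv ▸ hfu)
  · filter_upwards [(hf u hu).eventually (isOpen_ne.mem_nhds hfu)] with v hv
    simp only [hfu, hv]

theorem ContinuousWithinAt.exists_forall_inv_mul_mem {α G : Type*} [TopologicalSpace α]
    [TopologicalSpace G] [Group G] [IsTopologicalGroup G] {γ : α → G} {J : Set α} {t₀ : α}
    (hγ : ContinuousWithinAt γ J t₀) {V : Set G} (hV : V ∈ 𝓝 (1 : G)) :
    ∃ N ∈ 𝓝 t₀, ∀ s ∈ N ∩ J, ∀ t ∈ N ∩ J, (γ s)⁻¹ * γ t ∈ V := by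
  have hlim : Tendsto (fun p : α × α => (γ p.1)⁻¹ * γ p.2) (𝓝[J] t₀ ×ˢ 𝓝[J] t₀)
      (𝓝 ((γ t₀)⁻¹ * γ t₀)) :=
    (hγ.tendsto.comp tendsto_fst).inv.mul (hγ.tendsto.comp tendsto_snd)
  rw [inv_mul_cancel] at hlim
  obtain ⟨T, hT, hTV⟩ := (eventually_prod_self_iff (r := fun s t => (γ s)⁻¹ * γ t ∈ V)).1
    (hlim.eventually_mem hV)
  obtain ⟨N, hN, hNT⟩ := mem_nhdsWithin_iff_exists_mem_nhds_inter.1 hT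
  exact ⟨N, hN, fun s hs t ht => hTV s (hNT hs) t (hNT ht)⟩

structure CountableSliceChart {G : Type*} [TopologicalSpace G] [Group G] (K : Subgroup G)
    (X : Type*) [TopologicalSpace X] where
  source : Set G
  isOpen_source : IsOpen source
  one_mem_source : (1 : G) ∈ source
  proj : G → X
  continuousOn_proj : ContinuousOn proj source
  countable_proj_image : (proj '' (source ∩ K)).Countable
  mem_of_proj_eq : ∀ g ∈ source, proj g = proj 1 → g ∈ K

namespace CountableSliceChart

variable {G : Type*} [TopologicalSpace G] [Group G] {K : Subgroup G} {X : Type*} [MetricSpace X]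

theorem mem_of_mem_of_forall_inv_mul_mem [ContinuousMul G] (c : CountableSliceChart K X)
    {I : Set ℝ} (hI : I.OrdConnected) {γ : ℝ → G} (hγ : ContinuousOn γ I)
    (hopen : ∀ t ∈ I, γ t ∈ K → γ ⁻¹' K ∈ 𝓝[I] t)
    (hsmall : ∀ s ∈ I, ∀ t ∈ I, (γ s)⁻¹ * γ t ∈ c.source) {s t : ℝ} (hs : s ∈ I) (ht : t ∈ I)
    (hsK : γ s ∈ K) : γ t ∈ K := by
  have hfib : ∀ u ∈ I, c.proj ((γ s)⁻¹ * γ u) = c.proj 1 → γ u ∈ K := fun u hu hfu => by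
    simpa using K.mul_mem hsK (c.mem_of_proj_eq _ (hsmall s hs u hu) hfu)
  refine hfib t ht (hI.apply_eq_of_countable_image (S := γ ⁻¹' K) ?_
    (fun u hu => hopen u hu.1 hu.2) ?_ hfib hs ht (by simp only [inv_mul_cancel]))
  · exact c.continuousOn_proj.comp (continuousOn_const.mul hγ) fun u hu => hsmall s hs u hu
  · refine c.countable_proj_image.mono ?_
    rintro _ ⟨u, ⟨hu, huK⟩, rfl⟩
    exact mem_image_of_mem _ ⟨hsmall s hs u hu, K.mul_mem (K.inv_mem hsK) huK⟩

theorem forall_mem_of_isOpen_preimage [IsTopologicalGroup G] (c : CountableSliceChart K X)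
    {J : Set ℝ} (hJ : J.OrdConnected) {γ : ℝ → G} (hγ : ContinuousOn γ J)
    (hopen : IsOpen (Subtype.val ⁻¹' (γ ⁻¹' K) : Set J))
    (hne : (J ∩ γ ⁻¹' K).Nonempty) : ∀ t ∈ J, γ t ∈ K := by
  obtain ⟨t₁, ht₁J, ht₁K⟩ := hne
  have hnhds : ∀ t ∈ J, γ t ∈ K → γ ⁻¹' K ∈ 𝓝[J] t := fun t ht htK => by
    rw [nhdsWithin_eq_map_subtype_coe ht]
    exact hopen.mem_nhds htK
  intro t ht
  refine (hJ.isPreconnected.iff_of_eventually_iff (p := fun u => γ u ∈ K) (fun t₀ ht₀ => ?_)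
    ht₁J ht).1 ht₁K
  obtain ⟨N, hN, hsmall⟩ :=
    (hγ t₀ ht₀).exists_forall_inv_mul_mem (c.isOpen_source.mem_nhds c.one_mem_source)
  obtain ⟨ε, hε, hball⟩ := Metric.mem_nhds_iff.1 hN
  have hI : (J ∩ Metric.ball t₀ ε).OrdConnected := by
    rw [Real.ball_eq_Ioo]
    exact hJ.inter ordConnected_Ioo
  have hpropagate : ∀ s ∈ J ∩ Metric.ball t₀ ε, ∀ t ∈ J ∩ Metric.ball t₀ ε, γ s ∈ K → γ t ∈ K :=
    fun s hs t ht hsK => c.mem_of_mem_of_forall_inv_mul_mem hI (hγ.mono inter_subset_left)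
      (fun u hu huK => nhdsWithin_mono _ inter_subset_left (hnhds u hu.1 huK))
      (fun s hs t ht => hsmall s ⟨hball hs.2, hs.1⟩ t ⟨hball ht.2, ht.1⟩) hs ht hsK
  have ht₀ε : t₀ ∈ J ∩ Metric.ball t₀ ε := ⟨ht₀, Metric.mem_ball_self hε⟩
  filter_upwards [inter_mem_nhdsWithin J (Metric.ball_mem_nhds t₀ hε)] with u hu
  exact ⟨hpropagate t₀ ht₀ε u hu, hpropagate u hu t₀ ht₀ε⟩

end CountableSliceChart

section SliceChart

variable {G H X : Type*} [TopologicalSpace G] [Group G] [TopologicalSpace H] [Group H]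
  [TopologicalSpace X]

theorem countable_setOf_mem_range_of_prod_subset_source [ContinuousMul H]
    [TopologicalSpace.SeparableSpace H] (ι : H →* G) {σ : X → G}
    (e : OpenPartialHomeomorph (H × X) G) (he : ∀ p ∈ e.source, e p = ι p.1 * σ p.2)
    {W : Set H} {M : Set X} (hW : IsOpen W) (hW_ne : W.Nonempty) (hWM : W ×ˢ M ⊆ e.source) :
    {c ∈ M | σ c ∈ ι.range}.Countable := by
  choose! k hk using fun c (hc : c ∈ {c ∈ M | σ c ∈ ι.range}) => hc.2
  refine PairwiseDisjoint.countable_of_isOpen (s := fun c => W * {k c}) ?_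
    (fun c _ => hW.mul_right) (fun c _ => hW_ne.mul (singleton_nonempty _))
  intro c hc c' hc' hne
  refine disjoint_left.2 ?_
  rintro _ ⟨w, hw, _, rfl, rfl⟩ ⟨w', hw', _, rfl, heq⟩
  have hmem : (w, c) ∈ e.source := hWM ⟨hw, hc.1⟩
  have hmem' : (w', c') ∈ e.source := hWM ⟨hw', hc'.1⟩
  refine hne (congrArg Prod.snd (e.injOn hmem hmem' ?_))
  rw [he _ hmem, he _ hmem', ← hk c hc, ← hk c' hc']
  simpa only [← map_mul] using congrArg ι heq.symm

theorem CountableSliceChart.nonempty_of_openPartialHomeomorph [ContinuousMul H]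
    [TopologicalSpace.SeparableSpace H] (ι : H →* G) {σ : X → G} {x₀ : X} (hσ : σ x₀ = 1)
    (e : OpenPartialHomeomorph (H × X) G) (he : ∀ p ∈ e.source, e p = ι p.1 * σ p.2)
    (h₀ : (1, x₀) ∈ e.source) : Nonempty (CountableSliceChart ι.range X) := by
  obtain ⟨W, M, hW, h1W, hM, hx₀M, hWM⟩ := mem_nhds_prod_iff'.1 (e.open_source.mem_nhds h₀)
  have he₀ : e (1, x₀) = 1 := by
    rw [he _ h₀, map_one, hσ, mul_one]
  have hsymm : e.symm 1 = (1, x₀) := by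
    rw [← e.left_inv h₀, he₀]
  have hplaque : ∀ g ∈ e.target, g = ι (e.symm g).1 * σ (e.symm g).2 := fun g hg => by
    rw [← he _ (e.map_target hg), e.right_inv hg]
  refine ⟨{ source := e.target ∩ e.symm ⁻¹' (W ×ˢ M)
            isOpen_source := e.isOpen_inter_preimage_symm (hW.prod hM)
            one_mem_source :=
              ⟨he₀ ▸ e.map_source h₀, by rw [mem_preimage, hsymm]; exact ⟨h1W, hx₀M⟩⟩
            proj := fun g => (e.symm g).2
            continuousOn_proj := continuous_snd.comp_continuousOn
              (e.continuousOn_symm.mono inter_subset_left)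
            countable_proj_image := ?_
            mem_of_proj_eq := fun g hg hproj => ⟨(e.symm g).1, ?_⟩ }⟩
  · refine (countable_setOf_mem_range_of_prod_subset_source ι e he hW ⟨1, h1W⟩ hWM).mono ?_
    rintro _ ⟨g, ⟨⟨hg, hgWM⟩, y, rfl⟩, rfl⟩
    refine ⟨hgWM.2, (e.symm (ι y)).1⁻¹ * y, ?_⟩
    rw [map_mul, map_inv, inv_mul_eq_iff_eq_mul]
    exact hplaque _ hg
  · simp only [hsymm] at hproj
    simpa only [hproj, hσ, mul_one] using (hplaque g hg.1).symm

end SliceChart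

theorem DifferentiableAt.hasFDerivAt_coprod_of_partial {𝕜 E₁ E₂ F : Type*}
    [NontriviallyNormedField 𝕜] [NormedAddCommGroup E₁] [NormedSpace 𝕜 E₁]
    [NormedAddCommGroup E₂] [NormedSpace 𝕜 E₂] [NormedAddCommGroup F] [NormedSpace 𝕜 F]
    {f : E₁ × E₂ → F} {a : E₁ × E₂} (hf : DifferentiableAt 𝕜 f a) {A : E₁ →L[𝕜] F}
    {B : E₂ →L[𝕜] F} (hA : HasFDerivAt (fun x => f (x, a.2)) A a.1)
    (hB : HasFDerivAt (fun y => f (a.1, y)) B a.2) : HasFDerivAt f (A.coprod B) a := by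
  rw [hA.unique (hf.hasFDerivAt.comp a.1 (hasFDerivAt_prodMk_left a.1 a.2)),
    hB.unique (hf.hasFDerivAt.comp a.2 (hasFDerivAt_prodMk_right a.1 a.2)),
    ContinuousLinearMap.coprod_comp_inl_inr]
  exact hf.hasFDerivAt

theorem exists_openPartialHomeomorph_eqOn_of_hasStrictFDerivAt {𝕜 E F M : Type*}
    [NontriviallyNormedField 𝕜] [NormedAddCommGroup E] [NormedSpace 𝕜 E]
    [NormedAddCommGroup F] [NormedSpace 𝕜 F] [CompleteSpace F] [TopologicalSpace M]
    [ChartedSpace E M] {f : F → M} {p : F} {q : M} (hf : ContinuousAt f p)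
    (hq : f p ∈ (chartAt E q).source) {L : F ≃L[𝕜] E}
    (hL : HasStrictFDerivAt (chartAt E q ∘ f) (L : F →L[𝕜] E) p) :
    ∃ e : OpenPartialHomeomorph F M, p ∈ e.source ∧ EqOn f e e.source := by
  obtain ⟨O, hOf, hO, hpO⟩ :=
    mem_nhds_iff.1 (hf.preimage_mem_nhds ((chartAt E q).open_source.mem_nhds hq))
  refine ⟨((hL.toOpenPartialHomeomorph _).restrOpen O hO).trans (chartAt E q).symm,
    ⟨⟨hL.mem_toOpenPartialHomeomorph_source, hpO⟩, ?_⟩, fun x hx => ?_⟩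
  · simpa [hL.toOpenPartialHomeomorph_coe] using (chartAt E q).map_source hq
  · simp [hL.toOpenPartialHomeomorph_coe, (chartAt E q).left_inv (hOf hx.1.2)]

theorem ContinuousLinearMap.exists_equiv_coprod_subtypeL {𝕜 E F : Type*}
    [NontriviallyNormedField 𝕜] [CompleteSpace 𝕜] [NormedAddCommGroup E] [NormedSpace 𝕜 E]
    [FiniteDimensional 𝕜 E] [NormedAddCommGroup F] [NormedSpace 𝕜 F] [FiniteDimensional 𝕜 F]
    {A : E →L[𝕜] F} (hA : Function.Injective A) {m : Submodule 𝕜 F}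
    (hm : IsCompl (LinearMap.range (A : E →ₗ[𝕜] F)) m) :
    ∃ L : (E × m) ≃L[𝕜] F, (L : E × m →L[𝕜] F) = A.coprod m.subtypeL :=
  ⟨(((LinearEquiv.ofInjective _ hA).prodCongr (LinearEquiv.refl 𝕜 m)).trans
    (Submodule.prodEquivOfIsCompl _ m hm)).toContinuousLinearEquiv, rfl⟩

theorem HasMFDerivAt.hasFDerivAt_chartAt {E F M N : Type*} [NormedAddCommGroup E]
    [NormedSpace ℝ E] [NormedAddCommGroup F] [NormedSpace ℝ F] [TopologicalSpace M]
    [ChartedSpace E M] [TopologicalSpace N] [ChartedSpace F N] {f : M → N} {x : M}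
    {A : E →L[ℝ] F} (hf : HasMFDerivAt 𝓘(ℝ, E) 𝓘(ℝ, F) f x A) :
    HasFDerivAt (chartAt F (f x) ∘ f ∘ (chartAt E x).symm) A (chartAt E x x) := by
  have h := hf.2
  simp only [writtenInExtChartAt, extChartAt_coe, extChartAt_coe_symm, modelWithCornersSelf_coe,
    modelWithCornersSelf_coe_symm, range_id, Function.id_comp, Function.comp_id] at h
  exact hasFDerivWithinAt_univ.1 h

section Transversal

variable {E : Type*} [NormedAddCommGroup E] [NormedSpace ℝ E] {M : Type*} [TopologicalSpace M]
  [ChartedSpace E M]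

def chartTransversal (x : M) (m : Submodule ℝ E) (c : m) : M :=
  (chartAt E x).symm (chartAt E x x + c)

@[simp]
theorem chartTransversal_zero (x : M) (m : Submodule ℝ E) : chartTransversal x m 0 = x := by
  simp [chartTransversal]

theorem contMDiffAt_chartTransversal {n : WithTop ℕ∞} [IsManifold 𝓘(ℝ, E) n M] (x : M)
    (m : Submodule ℝ E) : ContMDiffAt 𝓘(ℝ, m) 𝓘(ℝ, E) n (chartTransversal x m) 0 :=
  ContMDiffAt.comp_of_eq (contMDiffOn_chart_symm.contMDiffAt
    ((chartAt E x).open_target.mem_nhds (mem_chart_target E x)))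
    (contDiff_const.add m.subtypeL.contDiff).contMDiff.contMDiffAt (by simp)

theorem hasFDerivAt_chartAt_chartTransversal (x : M) (m : Submodule ℝ E) :
    HasFDerivAt (chartAt E x ∘ chartTransversal x m) m.subtypeL 0 := by
  refine (m.subtypeL.hasFDerivAt.const_add (chartAt E x x)).congr_of_eventuallyEq ?_
  have hx : chartAt E x x + ((0 : m) : E) ∈ (chartAt E x).target := by simp
  filter_upwards [((continuous_const.add continuous_subtype_val).tendsto (0 : m)).eventually_mem
    ((chartAt E x).open_target.mem_nhds hx)] with c hc
  exact (chartAt E x).right_inv hc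

end Transversal

section MulTransversal

variable {E : Type*} [NormedAddCommGroup E] [NormedSpace ℝ E]
  {G : Type*} [TopologicalSpace G] [ChartedSpace E G] [Group G]
  {E' : Type*} [NormedAddCommGroup E'] [NormedSpace ℝ E']
  {H : Type*} [TopologicalSpace H] [ChartedSpace E' H] [Group H]

def mulChartTransversal (ι : H →* G) (m : Submodule ℝ E) (p : E' × m) : G :=
  ι ((chartAt E' (1 : H)).symm p.1) * chartTransversal (1 : G) m p.2

theorem contMDiffAt_mulChartTransversal {n : WithTop ℕ∞} [LieGroup 𝓘(ℝ, E) n G]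
    [IsManifold 𝓘(ℝ, E') n H] {ι : H →* G} (hι : ContMDiffAt 𝓘(ℝ, E') 𝓘(ℝ, E) n ι 1)
    (m : Submodule ℝ E) :
    ContMDiffAt 𝓘(ℝ, E' × m) 𝓘(ℝ, E) n (mulChartTransversal ι m) (chartAt E' (1 : H) 1, 0) := by
  have hιψ : ContMDiffAt 𝓘(ℝ, E') 𝓘(ℝ, E) n (ι ∘ (chartAt E' (1 : H)).symm)
      (chartAt E' (1 : H) 1) :=
    ContMDiffAt.comp_of_eq hι (contMDiffOn_chart_symm.contMDiffAt
      ((chartAt E' (1 : H)).open_target.mem_nhds (mem_chart_target E' (1 : H)))) (by simp)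
  exact (hιψ.comp (f := Prod.fst) (chartAt E' (1 : H) 1, (0 : m))
    contDiff_fst.contMDiff.contMDiffAt).mul ((contMDiffAt_chartTransversal (1 : G) m).comp
      (f := Prod.snd) (chartAt E' (1 : H) 1, (0 : m)) contDiff_snd.contMDiff.contMDiffAt)

theorem hasStrictFDerivAt_chartAt_mulChartTransversal {n : WithTop ℕ∞} (hn : n ≠ 0)
    [LieGroup 𝓘(ℝ, E) n G] [IsManifold 𝓘(ℝ, E') n H] {ι : H →* G}
    (hι : ContMDiffAt 𝓘(ℝ, E') 𝓘(ℝ, E) n ι 1) {A : E' →L[ℝ] E}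
    (hA : HasMFDerivAt 𝓘(ℝ, E') 𝓘(ℝ, E) ι 1 A) (m : Submodule ℝ E) :
    HasStrictFDerivAt (chartAt E (1 : G) ∘ mulChartTransversal ι m) (A.coprod m.subtypeL)
      (chartAt E' (1 : H) 1, 0) := by
  have hΨ : mulChartTransversal ι m (chartAt E' (1 : H) 1, 0) = 1 := by simp [mulChartTransversal]
  have hsmooth : ContDiffAt ℝ n (chartAt E (1 : G) ∘ mulChartTransversal ι m)
      (chartAt E' (1 : H) 1, 0) :=
    (ContMDiffAt.comp_of_eq (contMDiffOn_chart.contMDiffAt ((chartAt E (1 : G)).open_source.mem_nhds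
      (mem_chart_source E 1))) (contMDiffAt_mulChartTransversal hι m) hΨ).contDiffAt
  have h₁ : HasFDerivAt (fun y => chartAt E (1 : G) (mulChartTransversal ι m (y, 0))) A
      (chartAt E' (1 : H) 1) := by
    have hfun : (fun y => chartAt E (1 : G) (mulChartTransversal ι m (y, 0))) =
        chartAt E (ι 1) ∘ ι ∘ (chartAt E' (1 : H)).symm := by
      ext y
      simp [mulChartTransversal]
    rw [hfun]
    exact hA.hasFDerivAt_chartAt
  have h₂ : HasFDerivAt
      (fun c : m => chartAt E (1 : G) (mulChartTransversal ι m (chartAt E' (1 : H) 1, c)))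
      m.subtypeL 0 := by
    simpa [Function.comp_def, mulChartTransversal] using
      hasFDerivAt_chartAt_chartTransversal (1 : G) m
  exact hsmooth.hasStrictFDerivAt'
    ((hsmooth.differentiableAt hn).hasFDerivAt_coprod_of_partial h₁ h₂) hn

end MulTransversal

theorem exists_openPartialHomeomorph_eq_mul_of_injective_mfderiv {n : WithTop ℕ∞} (hn : n ≠ 0)
    {E : Type*} [NormedAddCommGroup E] [NormedSpace ℝ E] [FiniteDimensional ℝ E]
    {G : Type*} [TopologicalSpace G] [ChartedSpace E G] [Group G] [LieGroup 𝓘(ℝ, E) n G]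
    {E' : Type*} [NormedAddCommGroup E'] [NormedSpace ℝ E'] [FiniteDimensional ℝ E']
    {H : Type*} [TopologicalSpace H] [ChartedSpace E' H] [IsManifold 𝓘(ℝ, E') n H] [Group H]
    (ι : H →* G) (hι : ContMDiffAt 𝓘(ℝ, E') 𝓘(ℝ, E) n ι 1)
    (hι_imm : Function.Injective (mfderiv 𝓘(ℝ, E') 𝓘(ℝ, E) ι 1)) :
    ∃ (m : Submodule ℝ E) (σ : m → G), σ 0 = 1 ∧ ∃ e : OpenPartialHomeomorph (H × m) G,
      (1, 0) ∈ e.source ∧ ∀ p ∈ e.source, e p = ι p.1 * σ p.2 := by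
  set A : E' →L[ℝ] E := mfderiv 𝓘(ℝ, E') 𝓘(ℝ, E) ι 1
  obtain ⟨m, hm⟩ := Submodule.exists_isCompl (LinearMap.range (A : E' →ₗ[ℝ] E))
  obtain ⟨L, hL⟩ := ContinuousLinearMap.exists_equiv_coprod_subtypeL (A := A) hι_imm hm
  have hstrict := hasStrictFDerivAt_chartAt_mulChartTransversal hn hι
    (hι.mdifferentiableAt hn).hasMFDerivAt m
  rw [← hL] at hstrict
  obtain ⟨e, he₀, he⟩ := exists_openPartialHomeomorph_eqOn_of_hasStrictFDerivAt
    (contMDiffAt_mulChartTransversal hι m).continuousAt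
    (by simp [mulChartTransversal]) hstrict
  refine ⟨m, chartTransversal 1 m, chartTransversal_zero 1 m,
    ((chartAt E' 1).prod (OpenPartialHomeomorph.refl m)).trans e, by simpa using he₀, ?_⟩
  rintro ⟨h, c⟩ ⟨⟨hh, -⟩, hp⟩
  have hp' : (chartAt E' (1 : H) h, c) ∈ e.source := hp
  show e (chartAt E' (1 : H) h, c) = ι h * chartTransversal 1 m c
  rw [← he hp']
  simp [mulChartTransversal, (chartAt E' (1 : H)).left_inv hh]

theorem curve_in_lie_subgroup_general
    {E : Type*} [NormedAddCommGroup E] [NormedSpace ℝ E] [FiniteDimensional ℝ E]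
    {G : Type*} [TopologicalSpace G] [ChartedSpace E G] [Group G]
    [LieGroup 𝓘(ℝ, E) (⊤ : ℕ∞) G]
    {E' : Type*} [NormedAddCommGroup E'] [NormedSpace ℝ E'] [FiniteDimensional ℝ E']
    {H : Type*} [TopologicalSpace H] [ChartedSpace E' H] [Group H]
    [LieGroup 𝓘(ℝ, E') (⊤ : ℕ∞) H] [SecondCountableTopology H]
    (ι : H →* G) (hι_smooth : ContMDiff 𝓘(ℝ, E') 𝓘(ℝ, E) (⊤ : ℕ∞) ι)
    (hι_imm : ∀ h : H, Function.Injective (mfderiv 𝓘(ℝ, E') 𝓘(ℝ, E) ι h))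
    (J : Set ℝ) (hJ : J.OrdConnected)
    (lam : ℝ → G) (hlam : ContinuousOn lam J)
    (hopen : IsOpen (Subtype.val ⁻¹' (lam ⁻¹' Set.range ι) : Set J))
    (hne : (J ∩ lam ⁻¹' Set.range ι).Nonempty) :
    ∀ t ∈ J, lam t ∈ Set.range ι := by
  have := topologicalGroup_of_lieGroup 𝓘(ℝ, E) (⊤ : ℕ∞) (G := G)
  have := topologicalGroup_of_lieGroup 𝓘(ℝ, E') (⊤ : ℕ∞) (G := H)
  obtain ⟨m, σ, hσ, e, he₀, he⟩ := exists_openPartialHomeomorph_eq_mul_of_injective_mfderiv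
    (by simp) ι hι_smooth.contMDiffAt (hι_imm 1)
  obtain ⟨c⟩ := CountableSliceChart.nonempty_of_openPartialHomeomorph ι hσ e he he₀
  exact c.forall_mem_of_isOpen_preimage hJ hlam hopen hne

/-- Let `𝒢` be a Lie group modeled on a finite-dimensional real vector space,
`H` a second-countable Lie group, and `ι : H → 𝒢` an injective smooth immersive group
homomorphism (so that `ι(H)` is a not necessarily closed Lie subgroup of `𝒢`). Let `J ⊆ ℝ` be
an interval and `λ : J → 𝒢` a continuous curve. If `λ⁻¹(ι(H))` is open in `J` and nonempty, then
`λ(J) ⊆ ι(H)`. -/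
theorem curve_in_lie_subgroup
    {E : Type*} [NormedAddCommGroup E] [NormedSpace ℝ E] [FiniteDimensional ℝ E]
    {G : Type*} [TopologicalSpace G] [ChartedSpace E G] [Group G]
    [LieGroup 𝓘(ℝ, E) (⊤ : ℕ∞) G]
    {E' : Type*} [NormedAddCommGroup E'] [NormedSpace ℝ E'] [FiniteDimensional ℝ E']
    {H : Type*} [TopologicalSpace H] [ChartedSpace E' H] [Group H]
    [LieGroup 𝓘(ℝ, E') (⊤ : ℕ∞) H] [SecondCountableTopology H]
    (ι : H →* G) (hι_smooth : ContMDiff 𝓘(ℝ, E') 𝓘(ℝ, E) (⊤ : ℕ∞) ι)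
    (hι_inj : Function.Injective ι)
    (hι_imm : ∀ h : H, Function.Injective (mfderiv 𝓘(ℝ, E') 𝓘(ℝ, E) ι h))
    (J : Set ℝ) (hJ : J.OrdConnected)
    (lam : ℝ → G) (hlam : ContinuousOn lam J)
    (hopen : IsOpen (Subtype.val ⁻¹' (lam ⁻¹' Set.range ι) : Set J))
    (hne : (J ∩ lam ⁻¹' Set.range ι).Nonempty) :
    ∀ t ∈ J, lam t ∈ Set.range ι :=
  curve_in_lie_subgroup_general ι hι_smooth hι_imm J hJ lam hlam hopen hne
end

section
/- Let X be a topological space that is Hausdorff, locally path-connected, connected and simply connected, and let 𝔓 be a presheaf of sets over X (an assignment of a set 𝔓(U) to every open U ⊆ X together with restriction maps 𝔓_{U,V} : 𝔓(U) → 𝔓(V) for opens V ⊆ U, with 𝔓_{U,U} = id and 𝔓_{V,W} ∘ 𝔓_{U,V} = 𝔓_{U,W}). Assume: (i) 𝔓 has the localization property: for every family (U_i)_{i∈I} of open subsets of X with union U, the map 𝔓(U) → ∏_{i∈I} 𝔓(U_i), f ↦ (𝔓_{U,U_i}(f)), is injective, and its image consists exactly of the families (f_i)_{i∈I} with 𝔓_{U_i,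 U_i∩U_j}(f_i) = 𝔓_{U_j, U_i∩U_j}(f_j) for all i, j ∈ I; (ii) 𝔓 has the uniqueness property: for every connected open U ⊆ X and every nonempty open V ⊆ U, the map 𝔓_{U,V} is injective; (iii) 𝔓 has the extension property: X can be covered by open sets U such that for every connected nonempty open V ⊆ U the map 𝔓_{U,V} is surjective. Then for every connected nonempty open subset V ⊆ X and every f ∈ 𝔓(V) there exists a unique f̄ ∈ 𝔓(X) with 𝔓_{X,V}(f̄) = f. -/
/-!
The germs of `P` form an étalé space `E → X`. Over a connected open `U` from which sections
extend inward, the uniqueness property makes the sheets `{germ s y | y ∈ U}`, `s ∈ 𝔓(U)`,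
pairwise disjoint and the extension property makes them exhaust the germs over `U`, so `E → X`
is a covering map. As `X` is simply connected and locally path-connected, the identity of `X`
lifts to a continuous section of `E → X` through the germ of `f`, and by the sheaf property a
continuous section is the family of germs of a global section `f̄`. Finally `f̄|V = f` because
both have the same germ at a point of the connected set `V`.
-/

open TopologicalSpace

universe u v

/-- A presheaf of sets over a topological space `X`: to each open set `U ⊆ X` it assigns a set
`sec U` of "sections over `U`", and to each inclusion of opens `V ⊆ U` a restriction map
`res : sec U → sec V`, functorially. -/
structure PresheafOfSets (X : Type u) [TopologicalSpace X] where
  sec : Opens X → Type v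
  res : ∀ {U V : Opens X}, V ≤ U → sec U → sec V
  res_self : ∀ (U : Opens X) (f : sec U), res le_rfl f = f
  res_res : ∀ {U V W : Opens X} (hVU : V ≤ U) (hWV : W ≤ V) (f : sec U),
    res hWV (res hVU f) = res (hWV.trans hVU) f

open Function Set

namespace PresheafOfSets

variable {X : Type u} [TopologicalSpace X] (P : PresheafOfSets.{u, v} X)

def IsSeparated : Prop :=
  ∀ (ι : Type u) (Ui : ι → Opens X),
    Injective (fun f : P.sec (iSup Ui) => fun i => P.res (le_iSup Ui i) f)

def HasGluing : Prop :=
  ∀ (ι : Type u) (Ui : ι → Opens X) (fi : ∀ i, P.sec (Ui i)),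
    (∀ i j, P.res (inf_le_left : Ui i ⊓ Ui j ≤ Ui i) (fi i)
          = P.res (inf_le_right : Ui i ⊓ Ui j ≤ Ui j) (fi j)) →
    ∃ f : P.sec (iSup Ui), ∀ i, P.res (le_iSup Ui i) f = fi i

def HasUniqueness : Prop :=
  ∀ (U V : Opens X), IsPreconnected (U : Set X) → (V : Set X).Nonempty →
    ∀ hVU : V ≤ U, Injective (P.res hVU)

def ExtendsInward (U : Opens X) : Prop :=
  ∀ V : Opens X, ∀ hVU : V ≤ U, IsPreconnected (V : Set X) → (V : Set X).Nonempty →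
    Surjective (P.res hVU)

def HasExtension : Prop :=
  ∀ x : X, ∃ U : Opens X, x ∈ U ∧ P.ExtendsInward U

variable {P}

theorem res_eq_res_of_le {U U' W W' : Opens X} {a : P.sec U} {b : P.sec U'} {hU : W ≤ U}
    {hU' : W ≤ U'} (h : P.res hU a = P.res hU' b) (hW : W' ≤ W) :
    P.res (hW.trans hU) a = P.res (hW.trans hU') b := by
  rw [← P.res_res hU hW, h, P.res_res]

theorem ExtendsInward.mono {U U' : Opens X} (hU : P.ExtendsInward U) (h : U' ≤ U) :
    P.ExtendsInward U' := by
  intro V hVU' hV hVne g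
  obtain ⟨s, rfl⟩ := hU V (hVU'.trans h) hV hVne g
  exact ⟨P.res h s, P.res_res _ _ _⟩

variable (P)

structure SectionAt (x : X) where
  dom : Opens X
  mem_dom : x ∈ dom
  val : P.sec dom

def germSetoid (x : X) : Setoid (P.SectionAt x) where
  r s t := ∃ W : Opens X, x ∈ W ∧
    ∃ (hs : W ≤ s.dom) (ht : W ≤ t.dom), P.res hs s.val = P.res ht t.val
  iseqv :=
    { refl s := ⟨s.dom, s.mem_dom, le_rfl, le_rfl, rfl⟩
      symm := fun ⟨W, hx, hs, ht, h⟩ => ⟨W, hx, ht, hs, h.symm⟩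
      trans := fun ⟨W, hx, hs, _, h⟩ ⟨W', hx', _, hu, h'⟩ =>
        ⟨W ⊓ W', ⟨hx, hx'⟩, inf_le_left.trans hs, inf_le_right.trans hu,
          (res_eq_res_of_le h inf_le_left).trans (res_eq_res_of_le h' inf_le_right)⟩ }

def Germ (x : X) : Type _ := Quotient (P.germSetoid x)

def germ {U : Opens X} (s : P.sec U) {x : X} (hx : x ∈ U) : P.Germ x :=
  Quotient.mk _ ⟨U, hx, s⟩

variable {P}

theorem germ_eq_germ_iff {U U' : Opens X} {s : P.sec U} {s' : P.sec U'} {x : X} {hx : x ∈ U}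
    {hx' : x ∈ U'} : P.germ s hx = P.germ s' hx' ↔
      ∃ W : Opens X, x ∈ W ∧ ∃ (h : W ≤ U) (h' : W ≤ U'), P.res h s = P.res h' s' :=
  Quotient.eq

theorem germ_res {U V : Opens X} (h : V ≤ U) (s : P.sec U) {x : X} (hx : x ∈ V) :
    P.germ (P.res h s) hx = P.germ s (h hx) :=
  germ_eq_germ_iff.2 ⟨V, hx, le_rfl, h, P.res_self _ _⟩

theorem exists_germ_eq {x : X} (γ : P.Germ x) :
    ∃ (U : Opens X) (s : P.sec U) (hx : x ∈ U), P.germ s hx = γ :=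
  Quotient.inductionOn γ fun s => ⟨s.dom, s.val, s.mem_dom, rfl⟩

theorem HasUniqueness.eq_of_germ_eq (huniq : P.HasUniqueness) {U : Opens X}
    (hU : IsPreconnected (U : Set X)) {s t : P.sec U} {x : X} {hx : x ∈ U}
    (h : P.germ s hx = P.germ t hx) : s = t := by
  obtain ⟨W, hxW, hWU, hWU', hst⟩ := germ_eq_germ_iff.1 h
  exact huniq U W hU ⟨x, hxW⟩ hWU hst

theorem IsSeparated.eq_of_forall_res_eq (hsep : P.IsSeparated) {U : Opens X} {ι : Type u}
    {Ui : ι → Opens X} (hle : ∀ i, Ui i ≤ U) (hcov : U ≤ iSup Ui) {s t : P.sec U}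
    (h : ∀ i, P.res (hle i) s = P.res (hle i) t) : s = t := by
  obtain rfl : iSup Ui = U := le_antisymm (iSup_le hle) hcov
  exact hsep ι Ui (funext h)

theorem IsSeparated.eq_of_germ_eq (hsep : P.IsSeparated) {U : Opens X} {s t : P.sec U}
    (h : ∀ x (hx : x ∈ U), P.germ s hx = P.germ t hx) : s = t := by
  choose W hxW hWU hWU' hst using fun x : U => germ_eq_germ_iff.1 (h x x.2)
  exact hsep.eq_of_forall_res_eq hWU (fun x hx => Opens.mem_iSup.2 ⟨⟨x, hx⟩, hxW _⟩) hst

variable (P)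

structure EtaleSpace where
  base : X
  germ : P.Germ base

def sheet {U : Opens X} (s : P.sec U) : Set P.EtaleSpace :=
  range fun y : U => (⟨y, P.germ s y.2⟩ : P.EtaleSpace)

instance : TopologicalSpace P.EtaleSpace :=
  generateFrom {S | ∃ (U : Opens X) (s : P.sec U), P.sheet s = S}

variable {P}

theorem mem_sheet_iff {U : Opens X} {s : P.sec U} {e : P.EtaleSpace} :
    e ∈ P.sheet s ↔ ∃ hx : e.base ∈ U, e.germ = P.germ s hx := by
  constructor
  · rintro ⟨⟨y, hy⟩, rfl⟩
    exact ⟨hy, rfl⟩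
  · obtain ⟨x, γ⟩ := e
    rintro ⟨hx, h⟩
    exact ⟨⟨x, hx⟩, congrArg (EtaleSpace.mk x) h.symm⟩

theorem mk_germ_mem_sheet {U : Opens X} (s : P.sec U) {x : X} (hx : x ∈ U) :
    (⟨x, P.germ s hx⟩ : P.EtaleSpace) ∈ P.sheet s :=
  mem_sheet_iff.2 ⟨hx, rfl⟩

theorem image_base_sheet {U : Opens X} (s : P.sec U) :
    EtaleSpace.base '' P.sheet s = U := by
  ext x
  constructor
  · rintro ⟨e, h, rfl⟩
    exact (mem_sheet_iff.1 h).1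
  · exact fun hx => ⟨_, mk_germ_mem_sheet s hx, rfl⟩

theorem sheet_res {U V : Opens X} (h : V ≤ U) (s : P.sec U) :
    P.sheet (P.res h s) = EtaleSpace.base ⁻¹' V ∩ P.sheet s := by
  ext e
  simp only [mem_inter_iff, mem_preimage, mem_sheet_iff, germ_res]
  exact ⟨fun ⟨hx, hγ⟩ => ⟨hx, h hx, hγ⟩, fun ⟨hx, _, hγ⟩ => ⟨hx, hγ⟩⟩

theorem isTopologicalBasis_sheet :
    IsTopologicalBasis {S | ∃ (U : Opens X) (s : P.sec U), P.sheet s = S} where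
  exists_subset_inter := by
    rintro _ ⟨U, s, rfl⟩ _ ⟨U', s', rfl⟩ e ⟨hs, hs'⟩
    obtain ⟨hx, hes⟩ := mem_sheet_iff.1 hs
    obtain ⟨hx', hes'⟩ := mem_sheet_iff.1 hs'
    obtain ⟨W, hxW, hWU, hWU', hres⟩ := germ_eq_germ_iff.1 (hes.symm.trans hes')
    refine ⟨_, ⟨W, P.res hWU s, rfl⟩, mem_sheet_iff.2 ⟨hxW, by rw [germ_res, hes]⟩, ?_⟩
    refine subset_inter ?_ ?_
    · rw [sheet_res]
      exact inter_subset_right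
    · rw [hres, sheet_res]
      exact inter_subset_right
  sUnion_eq := by
    refine eq_univ_of_forall fun e => ?_
    obtain ⟨U, s, hx, hs⟩ := exists_germ_eq e.germ
    exact ⟨_, ⟨U, s, rfl⟩, mem_sheet_iff.2 ⟨hx, hs.symm⟩⟩
  eq_generateFrom := rfl

theorem isOpen_sheet {U : Opens X} (s : P.sec U) : IsOpen (P.sheet s) :=
  isTopologicalBasis_sheet.isOpen ⟨U, s, rfl⟩

theorem isOpenMap_base : IsOpenMap (EtaleSpace.base : P.EtaleSpace → X) := by
  refine isTopologicalBasis_sheet.isOpenMap_iff.2 ?_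
  rintro _ ⟨U, s, rfl⟩
  rw [image_base_sheet]
  exact U.isOpen

theorem isOpen_iff_isOpen_preimage_inter_sheet {U : Opens X} (s : P.sec U) {W : Set X}
    (hWU : W ⊆ U) : IsOpen W ↔ IsOpen (EtaleSpace.base ⁻¹' W ∩ P.sheet s) := by
  refine ⟨fun hW => ?_, fun h => ?_⟩
  · have := isOpen_sheet (P.res (show (⟨W, hW⟩ : Opens X) ≤ U from hWU) s)
    rwa [sheet_res] at this
  · rw [← inter_eq_left.2 hWU, ← image_base_sheet s, ← image_preimage_inter]
    exact isOpenMap_base _ h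

theorem eq_mk_germ_of_mem_sheet {U : Opens X} {s : P.sec U} {e : P.EtaleSpace} {x : X}
    (hx : e.base = x) (he : e ∈ P.sheet s) : ∃ hxU : x ∈ U, e = ⟨x, P.germ s hxU⟩ := by
  obtain ⟨⟨y, hy⟩, rfl⟩ := he
  obtain rfl : y = x := hx
  exact ⟨hy, rfl⟩

theorem EtaleSpace.mk_inj {x : X} {γ γ' : P.Germ x} :
    (⟨x, γ⟩ : P.EtaleSpace) = ⟨x, γ'⟩ ↔ γ = γ' := by
  simp

theorem HasUniqueness.disjoint_sheet (huniq : P.HasUniqueness) {U : Opens X}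
    (hU : IsPreconnected (U : Set X)) {s t : P.sec U} (hst : s ≠ t) :
    Disjoint (P.sheet s) (P.sheet t) := by
  refine disjoint_left.2 fun e hs ht => hst ?_
  obtain ⟨_, hes⟩ := mem_sheet_iff.1 hs
  obtain ⟨_, het⟩ := mem_sheet_iff.1 ht
  exact huniq.eq_of_germ_eq hU (hes.symm.trans het)

theorem ExtendsInward.preimage_base_subset_iUnion_sheet [LocallyConnectedSpace X]
    {U : Opens X} (hU : P.ExtendsInward U) :
    EtaleSpace.base ⁻¹' (U : Set X) ⊆ ⋃ s : P.sec U, P.sheet s := by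
  intro e hx
  obtain ⟨V, t, hxV, ht⟩ := exists_germ_eq e.germ
  let C : Opens X := ⟨connectedComponentIn (U ⊓ V : Opens X) e.base,
    (U ⊓ V).isOpen.connectedComponentIn⟩
  have hxC : e.base ∈ C := mem_connectedComponentIn ⟨hx, hxV⟩
  have hCUV : C ≤ U ⊓ V := connectedComponentIn_subset _ _
  obtain ⟨s, hs⟩ := hU C (hCUV.trans inf_le_left) isPreconnected_connectedComponentIn ⟨_, hxC⟩
    (P.res (hCUV.trans inf_le_right) t)
  refine mem_iUnion.2 ⟨s, mem_sheet_iff.2 ⟨hx, ?_⟩⟩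
  rw [← ht, ← germ_res (hCUV.trans inf_le_right) t hxC, ← hs, germ_res]

theorem HasExtension.exists_isPreconnected [LocallyConnectedSpace X] (hext : P.HasExtension)
    (x : X) : ∃ U : Opens X, x ∈ U ∧ IsPreconnected (U : Set X) ∧ P.ExtendsInward U := by
  obtain ⟨U, hxU, hU⟩ := hext x
  exact ⟨⟨connectedComponentIn U x, U.isOpen.connectedComponentIn⟩,
    mem_connectedComponentIn hxU, isPreconnected_connectedComponentIn,
    hU.mono (connectedComponentIn_subset _ _)⟩

theorem isEvenlyCovered_base [LocallyConnectedSpace X] (huniq : P.HasUniqueness) {U : Opens X}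
    (hU : IsPreconnected (U : Set X)) (hUext : P.ExtendsInward U) {x : X} (hx : x ∈ U) :
    IsEvenlyCovered (EtaleSpace.base : P.EtaleSpace → X) x
      ((EtaleSpace.base : P.EtaleSpace → X) ⁻¹' {x}) := by
  let : TopologicalSpace (P.sec U) := ⊥
  have : DiscreteTopology (P.sec U) := ⟨rfl⟩
  refine IsEvenlyCovered.to_isEvenlyCovered_preimage (I := P.sec U) ?_
  cases isEmpty_or_nonempty (P.sec U) with
  | inl _ =>
    refine .of_preimage_eq_empty _ (U.isOpen.mem_nhds hx) (subset_empty_iff.1 ?_)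
    simpa using hUext.preimage_base_subset_iUnion_sheet
  | inr hne =>
    have : Nonempty (X → P.EtaleSpace) := ⟨fun _ => ⟨x, P.germ hne.some hx⟩⟩
    exact .of_trivialization (t := U.isOpen.trivializationDiscrete (fun s => P.sheet s) _
      (fun s _ hW => isOpen_iff_isOpen_preimage_inter_sheet s hW)
      (fun s => by
        rintro _ ⟨y, rfl⟩ _ ⟨y', rfl⟩ h
        obtain rfl := Subtype.ext h
        rfl)
      (fun s => (image_base_sheet s).superset)
      (fun s t hst => huniq.disjoint_sheet hU hst)
      hUext.preimage_base_subset_iUnion_sheet) hx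

theorem isCoveringMap_base [LocallyConnectedSpace X] (huniq : P.HasUniqueness)
    (hext : P.HasExtension) : IsCoveringMap (EtaleSpace.base : P.EtaleSpace → X) := fun x => by
  obtain ⟨U, hxU, hU, hUext⟩ := hext.exists_isPreconnected x
  exact isEvenlyCovered_base huniq hU hUext hxU

theorem exists_local_section_of_continuous {σ : X → P.EtaleSpace} (hσ : Continuous σ)
    (hσbase : ∀ x, (σ x).base = x) (x : X) :
    ∃ (W : Opens X) (t : P.sec W), x ∈ W ∧ ∀ y (hy : y ∈ W), σ y = ⟨y, P.germ t hy⟩ := by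
  obtain ⟨U, s, hx, hs⟩ := exists_germ_eq (σ x).germ
  let W : Opens X := ⟨σ ⁻¹' P.sheet s, (isOpen_sheet s).preimage hσ⟩
  have hWU : W ≤ U := fun y hy => hσbase y ▸ (mem_sheet_iff.1 hy).1
  refine ⟨W, P.res hWU s, mem_sheet_iff.2 ⟨hx, hs.symm⟩, fun y hy => ?_⟩
  have hyW : σ y ∈ P.sheet (P.res hWU s) := by
    rw [sheet_res]
    exact ⟨by rw [mem_preimage, hσbase]; exact hy, hy⟩
  exact (eq_mk_germ_of_mem_sheet (hσbase y) hyW).2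

theorem exists_global_section_of_continuous (hsep : P.IsSeparated) (hglue : P.HasGluing)
    {σ : X → P.EtaleSpace} (hσ : Continuous σ) (hσbase : ∀ x, (σ x).base = x) :
    ∃ F : P.sec ⊤, ∀ x, σ x = ⟨x, P.germ F (Opens.mem_top x)⟩ := by
  choose W t hxW ht using exists_local_section_of_continuous hσ hσbase
  have hcompat : ∀ x z,
      P.res inf_le_left (t x) = P.res (inf_le_right : W x ⊓ W z ≤ W z) (t z) :=
    fun x z => hsep.eq_of_germ_eq fun y hy => by
      rw [germ_res, germ_res, ← EtaleSpace.mk_inj, ← ht x y hy.1, ← ht z y hy.2]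
  obtain ⟨F, hF⟩ := hglue X W t hcompat
  have hcov : ⊤ ≤ iSup W := fun x _ => Opens.mem_iSup.2 ⟨x, hxW x⟩
  refine ⟨P.res hcov F, fun x => ?_⟩
  rw [ht x x (hxW x), ← hF x, germ_res, germ_res]

end PresheafOfSets

theorem presheaf_globalization_general
    {X : Type u} [TopologicalSpace X]
    [LocallyPathConnectedSpace X] [SimplyConnectedSpace X]
    (P : PresheafOfSets.{u, v} X)
    -- localization property
    (hloc_inj : ∀ (ι : Type u) (Ui : ι → Opens X),
      Function.Injective (fun f : P.sec (iSup Ui) => fun i => P.res (le_iSup Ui i) f))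
    (hloc_glue : ∀ (ι : Type u) (Ui : ι → Opens X) (fi : ∀ i, P.sec (Ui i)),
      (∀ i j, P.res (inf_le_left : Ui i ⊓ Ui j ≤ Ui i) (fi i)
            = P.res (inf_le_right : Ui i ⊓ Ui j ≤ Ui j) (fi j)) →
      ∃ f : P.sec (iSup Ui), ∀ i, P.res (le_iSup Ui i) f = fi i)
    -- uniqueness property
    (huniq : ∀ (U V : Opens X), IsPreconnected (U : Set X) → (V : Set X).Nonempty →
      ∀ hVU : V ≤ U, Function.Injective (P.res hVU))
    -- extension property
    (hext : ∀ x : X, ∃ U : Opens X, x ∈ U ∧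
      ∀ V : Opens X, ∀ hVU : V ≤ U, IsPreconnected (V : Set X) → (V : Set X).Nonempty →
        Function.Surjective (P.res hVU))
    (V : Opens X) (hVconn : IsPreconnected (V : Set X)) (hVne : (V : Set X).Nonempty)
    (f : P.sec V) :
    ∃! fbar : P.sec ⊤, P.res le_top fbar = f := by
  obtain ⟨x₀, hx₀⟩ := hVne
  obtain ⟨σ, ⟨hσx₀, hσ⟩, -⟩ := (P.isCoveringMap_base huniq hext).existsUnique_continuousMap_lifts
    (ContinuousMap.id X) x₀ ⟨x₀, P.germ f hx₀⟩ rfl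
  obtain ⟨F, hF⟩ :=
    P.exists_global_section_of_continuous hloc_inj hloc_glue σ.continuous (congrFun hσ)
  have hFf : P.res le_top F = f := by
    refine PresheafOfSets.HasUniqueness.eq_of_germ_eq huniq hVconn (hx := hx₀) ?_
    rw [PresheafOfSets.germ_res, ← PresheafOfSets.EtaleSpace.mk_inj, ← hF, hσx₀]
  exact ⟨F, hFf, fun G hG =>
    huniq ⊤ V isPreconnected_univ ⟨x₀, hx₀⟩ le_top (hG.trans hFf.symm)⟩

/-- globalization principle. Let `X` be a Hausdorff, locally path-connected,
connected and simply connected topological space and `𝔓` a presheaf of sets over `X` having: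
(i) the localization property (the sheaf condition: restrictions to a cover are jointly injective
and every compatible family glues); (ii) the uniqueness property (restriction from a connected
open set to a nonempty open subset is injective); (iii) the extension property (`X` is covered by
open sets `U` such that restriction from `U` to any connected nonempty open `V ⊆ U` is
surjective).  Then every section over a connected nonempty open set `V ⊆ X` extends uniquely to
a global section. -/
theorem presheaf_globalization
    {X : Type u} [TopologicalSpace X]
    [T2Space X] [LocallyPathConnectedSpace X] [ConnectedSpace X] [SimplyConnectedSpace X]
    (P : PresheafOfSets.{u, v} X)
    -- localization property
    (hloc_inj : ∀ (ι : Type u) (Ui : ι → Opens X),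
      Function.Injective (fun f : P.sec (iSup Ui) => fun i => P.res (le_iSup Ui i) f))
    (hloc_glue : ∀ (ι : Type u) (Ui : ι → Opens X) (fi : ∀ i, P.sec (Ui i)),
      (∀ i j, P.res (inf_le_left : Ui i ⊓ Ui j ≤ Ui i) (fi i)
            = P.res (inf_le_right : Ui i ⊓ Ui j ≤ Ui j) (fi j)) →
      ∃ f : P.sec (iSup Ui), ∀ i, P.res (le_iSup Ui i) f = fi i)
    -- uniqueness property
    (huniq : ∀ (U V : Opens X), IsPreconnected (U : Set X) → (V : Set X).Nonempty →
      ∀ hVU : V ≤ U, Function.Injective (P.res hVU))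
    -- extension property
    (hext : ∀ x : X, ∃ U : Opens X, x ∈ U ∧
      ∀ V : Opens X, ∀ hVU : V ≤ U, IsPreconnected (V : Set X) → (V : Set X).Nonempty →
        Function.Surjective (P.res hVU))
    (V : Opens X) (hVconn : IsPreconnected (V : Set X)) (hVne : (V : Set X).Nonempty)
    (f : P.sec V) :
    ∃! fbar : P.sec ⊤, P.res le_top fbar = f :=
  presheaf_globalization_general P hloc_inj hloc_glue huniq hext V hVconn hVne f
end

section
/- Let S and X be topological spaces, π : S → X a continuous local homeomorphism, and assume S is Hausdorff. Let U ⊆ X be a connected open subset that is quasi-fundamental for π, i.e., for every x ∈ U and every s ∈ S with π(s) = x there exists a continuous map σ : U → S with π ∘ σ equal to the inclusion of U into X and σ(x) = s. Then U is fundamental for π: π⁻¹(U) is the union of a family of pairwise disjoint open subsets of S, each of which is mapped homeomorphically onto U by π. -/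
/-!
Every point of `π ⁻¹' U` lies on the range of a continuous section of `π` over `U`. Such a range
is open, since a continuous section of a local homeomorphism over an open set is an open
embedding, and it is homeomorphic to `U` via `π`. Two sections that meet agree at a point, hence
everywhere, because over the connected set `U` the locus where they agree is open (`π` is locally
injective) and closed (`S` is Hausdorff). So distinct section ranges are disjoint.
-/

open Set Topology

section SectionRanges

variable {S : Type u} {X : Type v} [TopologicalSpace S] [TopologicalSpace X]

def sectionRanges (π : S → X) (U : Set X) : Set (Set S) :=
  {V | ∃ s : C(U, S), π ∘ s = (↑) ∧ range s = V}

variable {π : S → X} {U : Set X}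

lemma image_mem_sectionRanges {σ : X → S} (hσ : ContinuousOn σ U) (hπσ : ∀ y ∈ U, π (σ y) = y) :
    σ '' U ∈ sectionRanges π U :=
  ⟨⟨U.domRestrict σ, hσ.domRestrict⟩, funext fun y => hπσ y y.2, range_domRestrict σ U⟩

lemma sectionRanges_subset_preimage {V : Set S} (hV : V ∈ sectionRanges π U) : V ⊆ π ⁻¹' U := by
  obtain ⟨s, hs, rfl⟩ := hV
  rintro _ ⟨y, rfl⟩
  rw [mem_preimage, ← Function.comp_apply (f := π), hs]
  exact y.2

lemma sUnion_sectionRanges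
    (hquasi : ∀ x ∈ U, ∀ s : S, π s = x →
      ∃ σ : X → S, ContinuousOn σ U ∧ (∀ y ∈ U, π (σ y) = y) ∧ σ x = s) :
    ⋃₀ sectionRanges π U = π ⁻¹' U := by
  refine subset_antisymm (sUnion_subset fun V => sectionRanges_subset_preimage) fun t ht => ?_
  obtain ⟨σ, hσ, hπσ, hσt⟩ := hquasi (π t) ht t rfl
  exact ⟨σ '' U, image_mem_sectionRanges hσ hπσ, π t, ht, hσt⟩

lemma IsLocalHomeomorph.isOpenEmbedding_of_section (hπ : IsLocalHomeomorph π) (hU : IsOpen U)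
    (s : C(U, S)) (hs : π ∘ s = (↑)) : IsOpenEmbedding s :=
  hπ.isOpenEmbedding_of_comp (hs ▸ hU.isOpenEmbedding_subtypeVal) s.continuous

lemma IsLocalHomeomorph.isOpen_of_mem_sectionRanges (hπ : IsLocalHomeomorph π) (hU : IsOpen U)
    {V : Set S} (hV : V ∈ sectionRanges π U) : IsOpen V := by
  obtain ⟨s, hs, rfl⟩ := hV
  exact (hπ.isOpenEmbedding_of_section hU s hs).isOpen_range

lemma IsLocalHomeomorph.exists_homeomorph_of_mem_sectionRanges (hπ : IsLocalHomeomorph π)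
    (hU : IsOpen U) {V : Set S} (hV : V ∈ sectionRanges π U) :
    ∃ e : V ≃ₜ U, ∀ t : V, (e t : X) = π t := by
  obtain ⟨s, hs, rfl⟩ := hV
  let e := (hπ.isOpenEmbedding_of_section hU s hs).isEmbedding.toHomeomorph
  refine ⟨e.symm, fun t => ?_⟩
  conv_rhs => rw [← e.apply_symm_apply t, IsEmbedding.toHomeomorph_apply_coe]
  exact (congr_fun hs _).symm

lemma IsLocalHomeomorph.sectionRanges_pairwise_disjoint [T2Space S] (hπ : IsLocalHomeomorph π)
    (hU : IsPreconnected U) : (sectionRanges π U).Pairwise Disjoint := by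
  have : PreconnectedSpace U := isPreconnected_iff_preconnectedSpace.mp hU
  rintro _ ⟨s₁, hs₁, rfl⟩ _ ⟨s₂, hs₂, rfl⟩ hne
  by_contra hmeet
  refine hne ?_
  obtain ⟨_, ⟨a, rfl⟩, b, hba⟩ := not_disjoint_iff.mp hmeet
  have hab : a = b := Subtype.ext <| by
    rw [← congr_fun hs₁ a, ← congr_fun hs₂ b, Function.comp_apply, Function.comp_apply, hba]
  subst hab
  have hsame : (s₁ : U → S) = s₂ :=
    (T2Space.isSeparatedMap π).eq_of_comp_eq hπ.isLocallyInjective s₁.continuous s₂.continuous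
      (hs₁.trans hs₂.symm) a hba.symm
  rw [hsame]

end SectionRanges

/-- Let `π : S → X` be a continuous local homeomorphism with `S` Hausdorff, and
let `U ⊆ X` be a connected open subset which is quasi-fundamental for `π`: for every `x ∈ U` and
every `s ∈ π⁻¹(x)` there is a continuous local section `σ : U → S` of `π` with `σ x = s`.
Then `U` is fundamental for `π`: `π⁻¹(U)` is the union of a family of pairwise disjoint open
subsets of `S`, each of which is mapped homeomorphically onto `U` by `π`. -/
theorem quasiFundamental_isFundamental
    {S : Type u} {X : Type v} [TopologicalSpace S] [TopologicalSpace X] [T2Space S]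
    (π : S → X) (hπ : IsLocalHomeomorph π)
    (U : Set X) (hUopen : IsOpen U) (hUconn : IsConnected U)
    (hquasi : ∀ x ∈ U, ∀ s : S, π s = x →
      ∃ σ : X → S, ContinuousOn σ U ∧ (∀ y ∈ U, π (σ y) = y) ∧ σ x = s) :
    ∃ (ι : Type u) (V : ι → Set S), (∀ i, IsOpen (V i)) ∧
      Pairwise (Function.onFun Disjoint V) ∧ π ⁻¹' U = ⋃ i, V i ∧
      ∀ i, ∃ e : V i ≃ₜ U, ∀ s : V i, (e s : X) = π (s : S) :=
  ⟨sectionRanges π U, (↑), fun V => hπ.isOpen_of_mem_sectionRanges hUopen V.2,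
    (hπ.sectionRanges_pairwise_disjoint hUconn.isPreconnected).subtype,
    (sUnion_sectionRanges hquasi).symm.trans sUnion_eq_iUnion,
    fun V => hπ.exists_homeomorph_of_mem_sectionRanges hUopen V.2⟩
end
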